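/- arXiv:2410.22788 — 3 statements merged into one kernel-verified Lean document; each statement's English description precedes it below -/
import Mathlib

section
/- Consider the iteration θ_{t+1} = θ_t − λ∇_θ F(q_t; θ_t), where q_t = h(θ_t) for an implicit best-response map h: Θ → Q_α. Assume: (i) h is β_h-Lipschitz (w.r.t. the L¹ metric on Q_α), (ii) q ↦ ∇_θ F(q; θ_*) is β_q-Lipschitz, (iii) the first-order Taylor approximation ∇_θF(q_t;θ_t) = ∇_θF(q_t;θ_*) + ∇²_{θθ}F(q_t;θ_*)(θ_t − θ_*) holds, (iv) ∇_θ F(q_*; θ_*) = 0 at the limit point (q_*, θ_*), and (v) ‖∇²_{θθ}F(q_t;θ_*) − ∇²_{θθ}F(q_*;θ_*)‖ → 0. If ‖I − λ∇²_{θθ}F(q_*,θ_*)‖₂ < 1 − λβ_qβ_h, then limsup_{t→∞} ‖θ_{t+1} − θ_*‖₂ / ‖θ_t − θ_*‖₂ ≤ ‖I − λ∇²_{θθ}F(q_*,θ_*)‖₂ + λβ_qβ_h < 1, so the iteration converges linearly with rate ‖I − λ∇²_{θθ}F(q_*,θ_*)‖₂ + λβ_qβ_h. -/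
/-!
Write `e_t = θ_t - θ_*`. Substituting the Taylor expansion and `∇F(q_*; θ_*) = 0` into the
gradient step splits `e_{t+1}` into `(I - λH_*) e_t`, the Hessian drift `λ (H_t - H_*) e_t` and
the best-response drift `λ (∇F(q_t; θ_*) - ∇F(q_*; θ_*))`, the last of norm at most
`λ β_q β_h ‖e_t‖` by composing the two Lipschitz bounds. Hence
`‖e_{t+1}‖ / ‖e_t‖ ≤ ‖I - λH_*‖ + λ‖H_t - H_*‖ + λ β_q β_h`, and the middle term tends to zero.
-/

open Filter Topology

theorem limsup_le_of_le_of_tendsto {α : Type*} {l : Filter α} [l.NeBot] {f g : α → ℝ} {L : ℝ}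
    (hf : 0 ≤ f) (hfg : ∀ᶠ t in l, f t ≤ g t) (hg : Tendsto g l (𝓝 L)) :
    limsup f l ≤ L :=
  hg.limsup_eq ▸ limsup_le_limsup hfg (isCoboundedUnder_le_of_le l hf) hg.isBoundedUnder_le

theorem norm_sub_smul_add_apply_le {E : Type*} [NormedAddCommGroup E] [NormedSpace ℝ E]
    (A B : E →L[ℝ] E) (v g : E) {lam : ℝ} (hlam : 0 ≤ lam) :
    ‖v - lam • (g + B v)‖ ≤
      (‖ContinuousLinearMap.id ℝ E - lam • A‖ + lam * ‖B - A‖) * ‖v‖ + lam * ‖g‖ := by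
  have hsplit : v - lam • (g + B v) =
      (ContinuousLinearMap.id ℝ E - lam • A) v - lam • (B - A) v - lam • g := by
    simp only [sub_apply, smul_apply, ContinuousLinearMap.id_apply, smul_add, smul_sub]
    abel
  calc ‖v - lam • (g + B v)‖
      ≤ ‖(ContinuousLinearMap.id ℝ E - lam • A) v‖ + ‖lam • (B - A) v‖ + ‖lam • g‖ :=
        hsplit ▸ norm_sub_le_of_le (norm_sub_le _ _) le_rfl
    _ ≤ ‖ContinuousLinearMap.id ℝ E - lam • A‖ * ‖v‖ + lam * (‖B - A‖ * ‖v‖) + lam * ‖g‖ := by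
        rw [norm_smul, norm_smul, Real.norm_of_nonneg hlam]
        gcongr
        exacts [ContinuousLinearMap.le_opNorm _ _, ContinuousLinearMap.le_opNorm _ _]
    _ = (‖ContinuousLinearMap.id ℝ E - lam • A‖ + lam * ‖B - A‖) * ‖v‖ + lam * ‖g‖ := by ring

/-- Convergence rate for the follower player: under the Taylor expansion,
Lipschitz best-response and contraction assumptions, the iteration converges
linearly with rate `‖I - λ∇²F(q_*,θ_*)‖ + λ β_q β_h`. -/
theorem stmt5 {E : Type*} [NormedAddCommGroup E] [NormedSpace ℝ E]
    {Q : Type*} [MetricSpace Q]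
    (G : Q → E → E) (H : Q → E →L[ℝ] E) (h : E → Q)
    (θ : ℕ → E) (θs : E) (lam βq βh : ℝ)
    (hlam : 0 < lam) (hβq : 0 ≤ βq) (hβh : 0 ≤ βh)
    (hiter : ∀ t, θ (t+1) = θ t - lam • G (h (θ t)) (θ t))
    (hLiph : ∀ θ₁ θ₂ : E, dist (h θ₁) (h θ₂) ≤ βh * ‖θ₁ - θ₂‖)
    (hLipG : ∀ q₁ q₂ : Q, ‖G q₁ θs - G q₂ θs‖ ≤ βq * dist q₁ q₂)
    (hTaylor : ∀ t, G (h (θ t)) (θ t) = G (h (θ t)) θs + H (h (θ t)) (θ t - θs))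
    (hstat : G (h θs) θs = 0)
    (hHconv : Tendsto (fun t => ‖H (h (θ t)) - H (h θs)‖) atTop (nhds 0))
    (hcontr : ‖ContinuousLinearMap.id ℝ E - lam • H (h θs)‖ < 1 - lam * βq * βh) :
    limsup (fun t => ‖θ (t+1) - θs‖ / ‖θ t - θs‖) atTop ≤
      ‖ContinuousLinearMap.id ℝ E - lam • H (h θs)‖ + lam * βq * βh ∧
    ‖ContinuousLinearMap.id ℝ E - lam • H (h θs)‖ + lam * βq * βh < 1 := by
  set r := ‖ContinuousLinearMap.id ℝ E - lam • H (h θs)‖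
  set c : ℕ → ℝ := fun t => r + lam * ‖H (h (θ t)) - H (h θs)‖ + lam * βq * βh
  refine ⟨?_, by linarith⟩
  have hdrift : ∀ x, ‖G (h x) θs‖ ≤ βq * βh * ‖x - θs‖ := fun x => by
    simpa [hstat, mul_assoc] using (hLipG _ _).trans (mul_le_mul_of_nonneg_left (hLiph x θs) hβq)
  have hstep : ∀ t, ‖θ (t+1) - θs‖ ≤ c t * ‖θ t - θs‖ := fun t => by
    have he : θ (t+1) - θs = θ t - θs - lam • (G (h (θ t)) θs + H (h (θ t)) (θ t - θs)) := by
      rw [hiter, hTaylor]; abel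
    rw [he]
    refine (norm_sub_smul_add_apply_le (H (h θs)) _ _ _ hlam.le).trans ?_
    nlinarith [hdrift (θ t)]
  have hc : Tendsto c atTop (𝓝 (r + lam * βq * βh)) := by
    simpa using ((hHconv.const_mul lam).const_add r).add_const (lam * βq * βh)
  refine limsup_le_of_le_of_tendsto (fun t => by positivity)
    (Eventually.of_forall fun t => div_le_of_le_mul₀ (norm_nonneg _) ?_ (hstep t)) hc
  positivity
end

section
/- Let τ₁,...,τ_B be i.i.d. samples from density p, and let p_α be the normalized tail density with p_α(τ)/p(τ) ≤ 1/(1−α) and ℓ(τ;θ_*) ∈ [0, L_max]. Define the importance-weighted variance V = Var_{τ∼p}[(p_α(τ)/p(τ))ℓ(τ;θ_*)]. Then V ≤ (α/(1−α))·L_max² + Var_{τ∼p_α}[ℓ(τ;θ_*)]. -/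
open MeasureTheory

/-- Importance-weighted variance bound:
`Var_p[(p_α/p)ℓ] ≤ (α/(1-α))L_max² + Var_{p_α}[ℓ]`. -/
theorem stmt8 {T : Type*} [MeasurableSpace T] (μ : Measure T)
    (p pα ℓ : T → ℝ) (α Lmax : ℝ) (hα0 : 0 ≤ α) (hα1 : α < 1)
    (hp : ∀ τ, 0 < p τ) (hpα0 : ∀ τ, 0 ≤ pα τ)
    (hratio : ∀ τ, pα τ / p τ ≤ 1 / (1 - α))
    (hℓ0 : ∀ τ, 0 ≤ ℓ τ) (hℓb : ∀ τ, ℓ τ ≤ Lmax)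
    (hpαmass : ∫ τ, pα τ ∂μ = 1)
    (h1 : Integrable (fun τ => (pα τ / p τ * ℓ τ)^2 * p τ) μ)
    (h2 : Integrable (fun τ => (pα τ / p τ * ℓ τ) * p τ) μ)
    (h3 : Integrable (fun τ => (ℓ τ)^2 * pα τ) μ)
    (h4 : Integrable (fun τ => ℓ τ * pα τ) μ) :
    (∫ τ, (pα τ / p τ * ℓ τ)^2 * p τ ∂μ) - (∫ τ, (pα τ / p τ * ℓ τ) * p τ ∂μ)^2 ≤
      (α/(1-α)) * Lmax^2 +
        ((∫ τ, (ℓ τ)^2 * pα τ ∂μ) - (∫ τ, ℓ τ * pα τ ∂μ)^2) := by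
  have h1α : (0:ℝ) < 1 - α := by linarith
  -- pα is integrable since its integral is 1 ≠ 0
  have hpα_int : Integrable pα μ := by
    by_contra h
    rw [integral_undef h] at hpαmass
    norm_num at hpαmass
  -- second integral equals ∫ ℓ pα
  have heq2 : (∫ τ, (pα τ / p τ * ℓ τ) * p τ ∂μ) = ∫ τ, ℓ τ * pα τ ∂μ := by
    refine integral_congr_ae (Filter.Eventually.of_forall fun τ => ?_)
    have hpτ : p τ ≠ 0 := (hp τ).ne'
    field_simp
  -- pointwise bound for the first integrand
  have key : ∀ τ, (pα τ / p τ * ℓ τ)^2 * p τ ≤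
      (ℓ τ)^2 * pα τ + (α/(1-α) * Lmax^2) * pα τ := by
    intro τ
    have hpτ : p τ ≠ 0 := (hp τ).ne'
    have hrw : (pα τ / p τ * ℓ τ)^2 * p τ = (pα τ / p τ) * ((ℓ τ)^2 * pα τ) := by
      field_simp
    rw [hrw]
    have hw0 : 0 ≤ pα τ / p τ := div_nonneg (hpα0 τ) (hp τ).le
    have hg0 : 0 ≤ (ℓ τ)^2 * pα τ := mul_nonneg (sq_nonneg _) (hpα0 τ)
    have step1 : (pα τ / p τ) * ((ℓ τ)^2 * pα τ) ≤ (1/(1-α)) * ((ℓ τ)^2 * pα τ) :=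
      mul_le_mul_of_nonneg_right (hratio τ) hg0
    have hsq : (ℓ τ)^2 ≤ Lmax^2 := by nlinarith [hℓ0 τ, hℓb τ]
    have step2 : (1/(1-α)) * ((ℓ τ)^2 * pα τ) =
        (ℓ τ)^2 * pα τ + (α/(1-α)) * ((ℓ τ)^2 * pα τ) := by
      field_simp
      ring
    have hαr : 0 ≤ α/(1-α) := div_nonneg hα0 h1α.le
    have step3 : (α/(1-α)) * ((ℓ τ)^2 * pα τ) ≤ (α/(1-α) * Lmax^2) * pα τ := by
      have : (ℓ τ)^2 * pα τ ≤ Lmax^2 * pα τ :=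
        mul_le_mul_of_nonneg_right hsq (hpα0 τ)
      calc (α/(1-α)) * ((ℓ τ)^2 * pα τ) ≤ (α/(1-α)) * (Lmax^2 * pα τ) :=
            mul_le_mul_of_nonneg_left this hαr
        _ = (α/(1-α) * Lmax^2) * pα τ := by ring
    linarith
  have hgint : Integrable (fun τ => (ℓ τ)^2 * pα τ + (α/(1-α) * Lmax^2) * pα τ) μ :=
    h3.add (hpα_int.const_mul _)
  have hint : (∫ τ, (pα τ / p τ * ℓ τ)^2 * p τ ∂μ) ≤
      ∫ τ, ((ℓ τ)^2 * pα τ + (α/(1-α) * Lmax^2) * pα τ) ∂μ :=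
    integral_mono h1 hgint key
  have hsplit : (∫ τ, ((ℓ τ)^2 * pα τ + (α/(1-α) * Lmax^2) * pα τ) ∂μ) =
      (∫ τ, (ℓ τ)^2 * pα τ ∂μ) + (α/(1-α) * Lmax^2) := by
    rw [integral_add h3 (hpα_int.const_mul _), integral_const_mul, hpαmass, mul_one]
  rw [heq2]
  linarith [hint, hsplit.le, hsplit.ge]
end

section
/- (Generalization bound in tail risk cases) Let R(θ_*) = E_{p_α}[ℓ(τ;θ_*)] and R̂(θ_*) = (1/B)∑ᵢ δ(τᵢ)ℓ(τᵢ;θ_*) with τᵢ i.i.d. from p, δ the tail indicator, 0 ≤ ℓ ≤ L_max, and p_α/p ≤ 1/(1−α). Then for any ε ∈ (0,1), with probability at least 1 − ε: R(θ_*) ≤ R̂(θ_*) + sqrt(2((α/(1−α))L_max² + Var_{p_α}[ℓ(τ;θ_*)])·ln(1/ε)/B) + (L_max/(3(1−α)B))·(2ln(1/ε) + 3αB). -/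
set_option maxHeartbeats 1000000

open MeasureTheory ProbabilityTheory

lemma aux_fact (n : ℕ) : 2 * 3^n ≤ (Nat.factorial (n+2)) := by
  induction n with
  | zero => simp [Nat.factorial]
  | succ k ih =>
    have : (Nat.factorial (k+3)) = (k+3) * (Nat.factorial (k+2)) := rfl
    calc 2 * 3^(k+1) = 3 * (2 * 3^k) := by ring
    _ ≤ 3 * (Nat.factorial (k+2)) := by omega
    _ ≤ (k+3) * (Nat.factorial (k+2)) := by
        have := Nat.factorial_pos (k+2); nlinarith
    _ = (Nat.factorial (k+3)) := rfl

lemma aux_exp_neg {z : ℝ} (hz : 0 ≤ z) : Real.exp (-z) ≤ 1 - z + z^2/2 := by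
  have hq : (0:ℝ) < 1 + z + z^2/2 := by nlinarith
  have h1 : 1 + z + z^2/2 ≤ Real.exp z := by
    have := Real.sum_le_exp_of_nonneg hz 3
    simp [Finset.sum_range_succ, Nat.factorial] at this
    nlinarith [this]
  have h2 : Real.exp (-z) ≤ (1 + z + z^2/2)⁻¹ := by
    rw [Real.exp_neg]
    exact inv_anti₀ hq h1
  refine h2.trans ?_
  rw [inv_le_iff_one_le_mul₀ hq]
  nlinarith

lemma aux_exp_pos {y u : ℝ} (h0 : 0 ≤ y) (hyu : y ≤ u) (hu : u < 3) :
    Real.exp y ≤ 1 + y + y^2 / (2*(1-u/3)) := by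
  have hu0 : 0 ≤ u := h0.trans hyu
  have hr0 : 0 ≤ u/3 := by linarith
  have hr1 : u/3 < 1 := by linarith
  have hsum : Summable (fun n => y^n / (Nat.factorial n) : ℕ → ℝ) :=
    Real.summable_pow_div_factorial y
  have hexp : Real.exp y = ∑' n : ℕ, y^n / (Nat.factorial n) := by
    rw [Real.exp_eq_exp_ℝ, NormedSpace.exp_eq_tsum_div]
  have hsplit := hsum.sum_add_tsum_nat_add 2
  have htail : ∑' n : ℕ, y^(n+2) / (Nat.factorial (n+2)) ≤ y^2 / (2*(1-u/3)) := by
    have hterm : ∀ n : ℕ, y^(n+2) / (Nat.factorial (n+2)) ≤ (y^2/2) * (u/3)^n := by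
      intro n
      have h1 : y^(n+2) ≤ y^2 * u^n := by
        have : y^n ≤ u^n := pow_le_pow_left₀ h0 hyu n
        calc y^(n+2) = y^2 * y^n := by ring
        _ ≤ y^2 * u^n := by nlinarith [sq_nonneg y]
      have h2 : (2 * 3^n : ℝ) ≤ ((Nat.factorial (n+2)) : ℝ) := by
        exact_mod_cast aux_fact n
      have h3 : (0:ℝ) < 2 * 3^n := by positivity
      rw [div_le_iff₀ (lt_of_lt_of_le h3 h2)]
      have : (y^2/2) * (u/3)^n * (2*3^n) = y^2 * u^n := by
        rw [div_pow]; field_simp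
      calc y^(n+2) ≤ y^2 * u^n := h1
      _ = (y^2/2) * (u/3)^n * (2*3^n) := this.symm
      _ ≤ (y^2/2) * (u/3)^n * ((Nat.factorial (n+2))) := by
          have h4 : 0 ≤ (y^2/2) * (u/3)^n := by positivity
          nlinarith
    have hgs : Summable (fun n : ℕ => (y^2/2) * (u/3)^n) :=
      (summable_geometric_of_lt_one hr0 hr1).mul_left _
    have hts : Summable (fun n : ℕ => y^(n+2) / (Nat.factorial (n+2))) := by
      exact (summable_nat_add_iff 2).2 hsum
    calc ∑' n : ℕ, y^(n+2) / (Nat.factorial (n+2)) ≤ ∑' n : ℕ, (y^2/2) * (u/3)^n :=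
      Summable.tsum_le_tsum hterm hts hgs
    _ = (y^2/2) * (1 - u/3)⁻¹ := by rw [tsum_mul_left, tsum_geometric_of_lt_one hr0 hr1]
    _ = y^2 / (2*(1-u/3)) := by field_simp
  have hfin : ∑ i ∈ Finset.range 2, y^i / (Nat.factorial i) = 1 + y := by
    simp [Finset.sum_range_succ, Nat.factorial]
  rw [hexp, ← hsplit, hfin]
  linarith

lemma aux_exp_bound {y u : ℝ} (h : |y| ≤ u) (hu : u < 3) :
    Real.exp y ≤ 1 + y + y^2 / (2*(1-u/3)) := by
  have hu0 : 0 ≤ u := (abs_nonneg y).trans h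
  rcases le_or_gt y 0 with hy | hy
  · have h1 : Real.exp y ≤ 1 + y + y^2/2 := by
      have := aux_exp_neg (neg_nonneg.mpr hy)
      simpa [neg_neg] using this
    refine h1.trans ?_
    have h3 : (0:ℝ) < 1 - u/3 := by linarith
    have h2 : y^2/2 ≤ y^2/(2*(1-u/3)) := by
      apply div_le_div_of_nonneg_left (sq_nonneg y) (by linarith)
      linarith
    linarith
  · exact aux_exp_pos hy.le (le_trans (le_abs_self y) h) hu


lemma ineq_u3 {σ2 Lmax tt : ℝ} (hσ : 0 < σ2) : tt*Lmax < 3*(σ2 + Lmax*tt/3) := by linarith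

lemma ineq_ge {B σ2 Lmax a ss d : ℝ} (hBss2 : B*ss^2 = 2*σ2*a)
    (hBd : B*d = 2*Lmax*a/3) (hsd : 0 ≤ B*ss*d) :
    a*(2*(σ2 + Lmax*(ss+d)/3)) ≤ B*(ss+d)^2 := by
  have h4 : B*d*ss = 2*Lmax*a/3*ss := by rw [hBd]
  have h5 : B*d*d = 2*Lmax*a/3*d := by rw [hBd]
  nlinarith [h4, h5, hsd, hBss2]

lemma ineq_R {α Lmax μ' : ℝ} (h1α : 0 < 1-α) (hα0 : 0 ≤ α) (hμ0 : 0 ≤ μ')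
    (hμub : μ' ≤ (1-α)*Lmax) : (1/(1-α))*μ' ≤ μ' + α*Lmax := by
  rw [div_mul_eq_mul_div, div_le_iff₀ h1α]
  nlinarith

lemma ineq_var {α Lmax μ' s2 : ℝ} (h1α : 0 < 1-α) (hα0 : 0 ≤ α) (hμ0 : 0 ≤ μ')
    (hμub : μ' ≤ (1-α)*Lmax) (hv : 0 ≤ s2 - μ'^2) :
    s2 - μ'^2 ≤ (α/(1-α))*Lmax^2 + ((1/(1-α))*s2 - ((1/(1-α))*μ')^2) := by
  set β : ℝ := 1/(1-α) with hβdef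
  have hβ : (1-α)*β = 1 := by rw [hβdef]; field_simp
  have hβ0 : 0 < β := by rw [hβdef]; positivity
  have hβ1 : 1 ≤ β := by rw [hβdef, le_div_iff₀ h1α]; linarith
  have hαβ : α/(1-α) = α*β := by rw [hβdef]; ring
  rw [hαβ]
  have hμ2 : β*μ'^2 ≤ Lmax^2 := by
    have h4 : μ'^2 ≤ (1-α)^2*Lmax^2 := by nlinarith
    have h5 : β*μ'^2 ≤ β*((1-α)^2*Lmax^2) := mul_le_mul_of_nonneg_left h4 hβ0.le
    have h6 : β*((1-α)^2*Lmax^2) = (1-α)*Lmax^2 := by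
      rw [hβdef]; field_simp
    nlinarith [sq_nonneg Lmax]
  have h7 : β*μ'^2*((1-α)*β) = β*μ'^2 := by rw [hβ, mul_one]
  nlinarith [mul_nonneg (sub_nonneg.2 hβ1) hv,
    mul_nonneg (mul_nonneg hα0 hβ0.le) (sub_nonneg.2 hμ2), h7]

lemma ineq_mul2 {x y a : ℝ} (h : x ≤ y) (ha : 0 ≤ a) : 2*x*a ≤ 2*y*a := by nlinarith

lemma ineq_last {α Lmax a B d : ℝ} (h1α : 0 < 1-α) (hα0 : 0 ≤ α) (ha0 : 0 ≤ a)
    (hc : 0 < Lmax) (hB : 0 < B) (hd3 : d*(3*B) = 2*Lmax*a) :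
    d + α*Lmax ≤ (Lmax/(3*(1-α)*B))*(2*a + 3*α*B) := by
  have h3 : 0 < 3*(1-α)*B := by positivity
  rw [div_mul_eq_mul_div, le_div_iff₀ h3]
  have h4 : (1-α)*(d*(3*B)) = (1-α)*(2*Lmax*a) := by rw [hd3]
  nlinarith [h4, mul_nonneg (mul_nonneg hα0 hc.le) ha0,
    mul_nonneg (mul_nonneg (mul_nonneg hα0 hα0) hc.le) hB.le]

/-- Generalization bound in tail risk cases: with probability at least `1 - ε`,
`R(θ_*) ≤ R̂(θ_*) + sqrt(2((α/(1-α))L² + Var_{p_α}[ℓ])ln(1/ε)/B)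
  + (L/(3(1-α)B))(2ln(1/ε) + 3αB)`. -/
theorem stmt11 {Ω T : Type*} [MeasurableSpace Ω] [MeasurableSpace T]
    (P : Measure Ω) [IsProbabilityMeasure P]
    (ν : Measure T) [IsProbabilityMeasure ν]
    (B : ℕ) (hB : 0 < B) (τ : Fin B → Ω → T)
    (hmeas : ∀ i, Measurable (τ i))
    (hindep : iIndepFun τ P)
    (hlaw : ∀ i, Measure.map (τ i) P = ν)
    (δ ℓ : T → ℝ) (hℓmeas : Measurable ℓ) (hδmeas : Measurable δ)
    (α Lmax ε : ℝ) (hα0 : 0 ≤ α) (hα1 : α < 1)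
    (hε0 : 0 < ε) (hε1 : ε < 1)
    (hδ : ∀ t, δ t = 0 ∨ δ t = 1)
    (hℓ0 : ∀ t, 0 ≤ ℓ t) (hℓb : ∀ t, ℓ t ≤ Lmax)
    (htail : ∫ t, δ t ∂ν = 1 - α) :
    ENNReal.ofReal (1 - ε) ≤
      P {ω | (1/(1-α)) * (∫ t, δ t * ℓ t ∂ν) ≤
        (1/(B:ℝ)) * ∑ i, δ (τ i ω) * ℓ (τ i ω) +
        Real.sqrt (2 * ((α/(1-α)) * Lmax^2 +
          ((1/(1-α)) * (∫ t, δ t * (ℓ t)^2 ∂ν) -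
            ((1/(1-α)) * ∫ t, δ t * ℓ t ∂ν)^2)) * Real.log (1/ε) / B) +
        (Lmax / (3*(1-α)*B)) * (2 * Real.log (1/ε) + 3*α*B)} := by
  have h1α : (0:ℝ) < 1 - α := by linarith
  have hBR : (0:ℝ) < (B:ℝ) := by exact_mod_cast hB
  set a : ℝ := Real.log (1/ε) with ha
  have ha0 : 0 < a := Real.log_pos (by rw [lt_div_iff₀ hε0]; linarith)
  -- T is nonempty, hence Lmax ≥ 0
  have hT : Nonempty T := by
    by_contra h
    have h2 : (Set.univ : Set T) = ∅ := Set.univ_eq_empty_iff.2 (not_nonempty_iff.1 h)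
    have h3 := measure_univ (μ := ν)
    rw [h2, measure_empty] at h3
    exact zero_ne_one h3
  have hc0 : 0 ≤ Lmax := (hℓ0 hT.some).trans (hℓb hT.some)
  -- the random variable Z = δ * ℓ on T
  set Z : T → ℝ := fun t => δ t * ℓ t with hZdef
  have hZmeas : Measurable Z := hδmeas.mul hℓmeas
  have hZ0 : ∀ t, 0 ≤ Z t := by
    intro t; rcases hδ t with h | h <;> simp [hZdef, h, hℓ0 t]
  have hZc : ∀ t, Z t ≤ Lmax := by
    intro t; rcases hδ t with h | h <;> simp [hZdef, h] <;> [exact hc0; exact hℓb t]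
  have hZabs : ∀ t, |Z t| ≤ Lmax := fun t => abs_le.2 ⟨by linarith [hZ0 t], hZc t⟩
  have hZint : Integrable Z ν :=
    (integrable_const Lmax).mono' hZmeas.aestronglyMeasurable (ae_of_all _ hZabs)
  have hZsq : ∀ t, Z t^2 = δ t * (ℓ t)^2 := by
    intro t; rcases hδ t with h | h <;> simp [hZdef, h] <;> ring
  have hZ2meas : Measurable (fun t => Z t^2) := hZmeas.pow_const 2
  have hZ2int : Integrable (fun t => Z t^2) ν :=
    (integrable_const (Lmax^2)).mono' hZ2meas.aestronglyMeasurable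
      (ae_of_all _ (fun t => by
        rw [Real.norm_eq_abs, abs_of_nonneg (sq_nonneg _)]
        exact pow_le_pow_left₀ (hZ0 t) (hZc t) 2))
  set μ' : ℝ := ∫ t, Z t ∂ν with hμdef
  have hμint_eq : ∫ t, δ t * ℓ t ∂ν = μ' := rfl
  have hs2_eq : ∫ t, δ t * (ℓ t)^2 ∂ν = ∫ t, Z t^2 ∂ν := by
    apply integral_congr_ae; exact ae_of_all _ (fun t => (hZsq t).symm)
  set s2 : ℝ := ∫ t, Z t^2 ∂ν with hs2def
  have hμ0 : 0 ≤ μ' := integral_nonneg hZ0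
  have hμub : μ' ≤ (1-α) * Lmax := by
    have h1 : ∫ t, Z t ∂ν ≤ ∫ t, δ t * Lmax ∂ν := by
      apply integral_mono hZint
      · refine (integrable_const Lmax).mono' (hδmeas.mul_const Lmax).aestronglyMeasurable
          (ae_of_all _ (fun t => ?_))
        rcases hδ t with h | h <;> simp [h, Real.norm_eq_abs, abs_of_nonneg, hc0]
      · intro t
        rcases hδ t with h | h
        · simp [hZdef, h]
        · simp only [hZdef, h, one_mul]; exact hℓb t
    calc μ' ≤ ∫ t, δ t * Lmax ∂ν := h1
    _ = (1-α) * Lmax := by rw [integral_mul_const, htail]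
  set σ2 : ℝ := s2 - μ'^2 with hσ2def
  have hσ2nn : 0 ≤ σ2 := by
    have h1 : 0 ≤ ∫ t, (Z t - μ')^2 ∂ν := integral_nonneg (fun t => sq_nonneg _)
    have h2 : ∫ t, (Z t - μ')^2 ∂ν = s2 - μ'^2 := by
      have he : ∀ t, (Z t - μ')^2 = Z t^2 - (2*μ') * Z t + μ'^2 := fun t => by ring
      have hint1 : Integrable (fun t => Z t^2 - (2*μ') * Z t) ν := by
        exact hZ2int.sub (hZint.const_mul _)
      calc ∫ t, (Z t - μ')^2 ∂ν
          = ∫ t, (Z t^2 - (2*μ') * Z t + μ'^2) ∂ν := integral_congr_ae (ae_of_all _ he)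
      _ = (∫ t, (Z t^2 - (2*μ') * Z t) ∂ν) + ∫ _t, (μ'^2 : ℝ) ∂ν :=
          integral_add hint1 (integrable_const _)
      _ = ((∫ t, Z t^2 ∂ν) - ∫ t, (2*μ') * Z t ∂ν) + μ'^2 := by
          rw [integral_sub hZ2int (hZint.const_mul _), integral_const]; simp
      _ = s2 - μ'^2 := by rw [integral_const_mul]; simp [hμdef, hs2def]; ring
    linarith [h2 ▸ h1]
  -- trivial case Lmax = 0
  rcases eq_or_lt_of_le hc0 with hc | hc
  · have hl0 : ∀ t : T, ℓ t = 0 := fun t => le_antisymm (hc ▸ hℓb t) (hℓ0 t)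
    have hset : {ω | (1/(1-α)) * (∫ t, δ t * ℓ t ∂ν) ≤
        (1/(B:ℝ)) * ∑ i, δ (τ i ω) * ℓ (τ i ω) +
        Real.sqrt (2 * ((α/(1-α)) * Lmax^2 +
          ((1/(1-α)) * (∫ t, δ t * (ℓ t)^2 ∂ν) -
            ((1/(1-α)) * ∫ t, δ t * ℓ t ∂ν)^2)) * Real.log (1/ε) / B) +
        (Lmax / (3*(1-α)*B)) * (2 * Real.log (1/ε) + 3*α*B)} = Set.univ := by
      ext ω
      simp only [Set.mem_setOf_eq, Set.mem_univ, iff_true]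
      have h1 : ∫ t, δ t * ℓ t ∂ν = 0 := by simp [hl0]
      have h2 : ∫ t, δ t * (ℓ t)^2 ∂ν = 0 := by simp [hl0]
      rw [h1, h2]
      simp only [hl0, mul_zero, zero_mul, Finset.sum_const_zero, add_zero, ← hc]
      positivity
    rw [hset, measure_univ]
    exact ENNReal.ofReal_le_one.mpr (by linarith)
  -- main case: Lmax > 0
  set g : T → ℝ := fun t => μ' - Z t with hgdef
  have hgmeas : Measurable g := measurable_const.sub hZmeas
  have hgabs : ∀ t, |g t| ≤ Lmax := by
    intro t
    rw [abs_le]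
    constructor
    · have h1 := hZc t
      simp only [hgdef]
      nlinarith [hμ0]
    · have h1 := hZ0 t
      simp only [hgdef]
      nlinarith [hμub, hα0, hc0]
  have hgint : Integrable g ν := by exact (integrable_const μ').sub hZint
  have hgzero : ∫ t, g t ∂ν = 0 := by
    simp only [hgdef]
    rw [integral_sub (integrable_const _) hZint, integral_const]
    simp [hμdef]
  have hg2 : ∫ t, (g t)^2 ∂ν = σ2 := by
    have he : ∀ t, (g t)^2 = (Z t - μ')^2 := fun t => by simp only [hgdef]; ring
    rw [integral_congr_ae (ae_of_all _ he)]
    have he2 : ∀ t, (Z t - μ')^2 = Z t^2 - (2*μ') * Z t + μ'^2 := fun t => by ring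
    have hint1 : Integrable (fun t => Z t^2 - (2*μ') * Z t) ν := by
      exact hZ2int.sub (hZint.const_mul _)
    calc ∫ t, (Z t - μ')^2 ∂ν
        = ∫ t, (Z t^2 - (2*μ') * Z t + μ'^2) ∂ν := integral_congr_ae (ae_of_all _ he2)
    _ = (∫ t, (Z t^2 - (2*μ') * Z t) ∂ν) + ∫ _t, (μ'^2 : ℝ) ∂ν :=
        integral_add hint1 (integrable_const _)
    _ = ((∫ t, Z t^2 ∂ν) - ∫ t, (2*μ') * Z t ∂ν) + μ'^2 := by
        rw [integral_sub hZ2int (hZint.const_mul _), integral_const]; simp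
    _ = σ2 := by rw [integral_const_mul]; simp [hμdef, hs2def, hσ2def]; ring
  have hg2int : Integrable (fun t => (g t)^2) ν := by
    refine (integrable_const (Lmax^2)).mono' (hgmeas.pow_const 2).aestronglyMeasurable
      (ae_of_all _ (fun t => ?_))
    rw [Real.norm_eq_abs, abs_of_nonneg (sq_nonneg _), ← sq_abs]
    exact pow_le_pow_left₀ (abs_nonneg _) (hgabs t) 2
  set Y : Fin B → Ω → ℝ := fun i => g ∘ τ i with hYdef
  have hYmeas : ∀ i, Measurable (Y i) := fun i => hgmeas.comp (hmeas i)
  have hYindep : iIndepFun Y P :=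
    hindep.comp (fun _ => g) (fun _ => hgmeas)
  -- the deviation levels
  set d : ℝ := 2*Lmax*a/(3*(B:ℝ)) with hd
  set ss : ℝ := Real.sqrt (2*σ2*a/(B:ℝ)) with hss
  set tt : ℝ := ss + d with htt
  have hd0 : 0 < d := by rw [hd]; positivity
  have hss0 : 0 ≤ ss := Real.sqrt_nonneg _
  have htt0 : 0 < tt := by rw [htt]; linarith
  -- the Chernoff-Bernstein bound
  have key : ∀ lam : ℝ, 0 < lam → lam * Lmax < 3 →
      (P {ω | (B:ℝ)*tt ≤ ∑ i, Y i ω}).toReal ≤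
        Real.exp (-(lam * ((B:ℝ)*tt)) + (B:ℝ) * (σ2 * lam^2 / (2*(1 - lam*Lmax/3)))) := by
    intro lam hlam hu3
    have hu0 : 0 ≤ lam * Lmax := by positivity
    have hden : 0 < 1 - lam*Lmax/3 := by linarith
    have hexp_meas : Measurable (fun x : T => Real.exp (lam * g x)) :=
      (hgmeas.const_mul lam).exp
    have hbdd : ∀ x, |Real.exp (lam * g x)| ≤ Real.exp (lam * Lmax) := by
      intro x
      rw [abs_of_pos (Real.exp_pos _)]
      apply Real.exp_le_exp.2
      calc lam * g x ≤ lam * |g x| := mul_le_mul_of_nonneg_left (le_abs_self _) hlam.le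
      _ ≤ lam * Lmax := mul_le_mul_of_nonneg_left (hgabs x) hlam.le
    have hintexp : Integrable (fun x => Real.exp (lam * g x)) ν :=
      (integrable_const _).mono' hexp_meas.aestronglyMeasurable
        (ae_of_all _ fun x => by rw [Real.norm_eq_abs]; exact hbdd x)
    have hmgf_le : ∫ x, Real.exp (lam * g x) ∂ν ≤
        Real.exp (σ2 * lam^2 / (2*(1-lam*Lmax/3))) := by
      have hpt : ∀ x, Real.exp (lam * g x) ≤
          1 + lam * g x + (lam^2/(2*(1-lam*Lmax/3))) * (g x)^2 := by
        intro x
        have h1 : |lam * g x| ≤ lam * Lmax := by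
          rw [abs_mul, abs_of_pos hlam]
          exact mul_le_mul_of_nonneg_left (hgabs x) hlam.le
        have h2 := aux_exp_bound h1 hu3
        have h3 : (lam * g x)^2 / (2*(1-lam*Lmax/3)) =
            (lam^2/(2*(1-lam*Lmax/3))) * (g x)^2 := by ring
        linarith [h3 ▸ h2]
      have hintRHS : Integrable
          (fun x => 1 + lam * g x + (lam^2/(2*(1-lam*Lmax/3))) * (g x)^2) ν := by
        have hi1 : Integrable (fun x => 1 + lam * g x) ν := by
          exact (integrable_const 1).add (hgint.const_mul lam)
        exact hi1.add (hg2int.const_mul _)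
      have hi1 : Integrable (fun x => 1 + lam * g x) ν := by
        exact (integrable_const 1).add (hgint.const_mul lam)
      have hi2 : Integrable (fun x => (lam^2/(2*(1-lam*Lmax/3))) * (g x)^2) ν := by
        exact hg2int.const_mul _
      have hI : ∫ x, (1 + lam * g x + (lam^2/(2*(1-lam*Lmax/3))) * (g x)^2) ∂ν
          = 1 + (lam^2/(2*(1-lam*Lmax/3))) * σ2 := by
        rw [integral_add hi1 hi2,
          integral_add (integrable_const 1) (hgint.const_mul lam),
          integral_const, integral_const_mul, integral_const_mul, hgzero, hg2]
        simp
      calc ∫ x, Real.exp (lam * g x) ∂ν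
          ≤ ∫ x, (1 + lam * g x + (lam^2/(2*(1-lam*Lmax/3))) * (g x)^2) ∂ν :=
            integral_mono hintexp hintRHS hpt
      _ = 1 + (lam^2/(2*(1-lam*Lmax/3))) * σ2 := hI
      _ ≤ Real.exp ((lam^2/(2*(1-lam*Lmax/3))) * σ2) := by
          linarith [Real.add_one_le_exp ((lam^2/(2*(1-lam*Lmax/3))) * σ2)]
      _ = Real.exp (σ2 * lam^2 / (2*(1-lam*Lmax/3))) := by ring_nf
    have hmgf_eq : ∀ i, mgf (Y i) P lam = ∫ x, Real.exp (lam * g x) ∂ν := by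
      intro i
      have h1 : ∫ x, Real.exp (lam * g x) ∂ν = ∫ ω, Real.exp (lam * g (τ i ω)) ∂P := by
        rw [← hlaw i, integral_map (hmeas i).aemeasurable]
        rw [hlaw i]
        exact hexp_meas.aestronglyMeasurable
      rw [mgf, h1]
      rfl
    have hintY : ∀ i, Integrable (fun ω => Real.exp (lam * Y i ω)) P := by
      intro i
      refine (integrable_const (Real.exp (lam * Lmax))).mono'
        ((hYmeas i).const_mul lam).exp.aestronglyMeasurable (ae_of_all _ fun ω => ?_)
      rw [Real.norm_eq_abs]
      exact hbdd (τ i ω)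
    have hintS : Integrable (fun ω => Real.exp (lam * (∑ i, Y i) ω)) P :=
      hYindep.integrable_exp_mul_sum hYmeas (fun i _ => hintY i)
    have hcher := measure_ge_le_exp_mul_mgf (μ := P) (X := ∑ i, Y i) ((B:ℝ)*tt) hlam.le hintS
    simp only [Finset.sum_apply] at hcher
    have hm0 : 0 ≤ ∫ x, Real.exp (lam * g x) ∂ν :=
      integral_nonneg fun x => (Real.exp_pos _).le
    have hprod : mgf (∑ i, Y i) P lam = (∫ x, Real.exp (lam * g x) ∂ν)^B := by
      rw [hYindep.mgf_sum hYmeas Finset.univ]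
      simp [hmgf_eq, Finset.prod_const, Finset.card_univ]
    calc (P {ω | (B:ℝ)*tt ≤ ∑ i, Y i ω}).toReal
        ≤ Real.exp (-lam * ((B:ℝ)*tt)) * mgf (∑ i, Y i) P lam := hcher
    _ ≤ Real.exp (-lam * ((B:ℝ)*tt)) *
          (Real.exp (σ2 * lam^2 / (2*(1-lam*Lmax/3))))^B := by
        rw [hprod]
        exact mul_le_mul_of_nonneg_left (pow_le_pow_left₀ hm0 hmgf_le B) (Real.exp_pos _).le
    _ = Real.exp (-(lam * ((B:ℝ)*tt)) + (B:ℝ) * (σ2 * lam^2 / (2*(1 - lam*Lmax/3)))) := by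
        rw [← Real.exp_nat_mul, ← Real.exp_add]
        ring_nf
  have hloge : Real.log ε = -a := by
    rw [ha, one_div, Real.log_inv]; ring
  have hchern : (P {ω | (B:ℝ)*tt ≤ ∑ i, Y i ω}).toReal ≤ ε := by
    rcases eq_or_lt_of_le hσ2nn with hσ | hσ
    · -- degenerate: σ2 = 0
      have hss_eq : ss = 0 := by
        rw [hss, ← hσ]; simp
      have hlam0 : (0:ℝ) < 3/(2*Lmax) := by positivity
      have hu3 : (3/(2*Lmax)) * Lmax < 3 := by
        rw [div_mul_eq_mul_div, div_lt_iff₀ (by positivity)]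
        linarith
      have h1 := key (3/(2*Lmax)) hlam0 hu3
      refine h1.trans ?_
      have hv : σ2 * (3/(2*Lmax))^2 / (2*(1-(3/(2*Lmax))*Lmax/3)) = 0 := by
        rw [← hσ]; simp
      have hexp : (3/(2*Lmax)) * ((B:ℝ)*tt) = a := by
        rw [htt, hss_eq, hd]
        field_simp
        ring
      rw [hv, hexp, mul_zero, add_zero, ← hloge, Real.exp_log hε0]
    · -- main: σ2 > 0
      have hD0 : 0 < σ2 + Lmax*tt/3 := by positivity
      set lam : ℝ := tt/(σ2 + Lmax*tt/3) with hlamdef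
      have hlam0 : 0 < lam := div_pos htt0 hD0
      have hu3 : lam * Lmax < 3 := by
        rw [hlamdef, div_mul_eq_mul_div, div_lt_iff₀ hD0]
        exact ineq_u3 hσ
      have h1 := key lam hlam0 hu3
      refine h1.trans ?_
      have hden : 1 - lam*Lmax/3 = σ2/(σ2 + Lmax*tt/3) := by
        rw [hlamdef]
        field_simp
        ring
      have hDne : σ2 + Lmax*tt/3 ≠ 0 := ne_of_gt hD0
      have hσne : σ2 ≠ 0 := ne_of_gt hσ
      have hv : σ2 * lam^2 / (2*(1-lam*Lmax/3)) = tt^2/(2*(σ2 + Lmax*tt/3)) := by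
        rw [hden, hlamdef]
        field_simp
      have hexp : -(lam * ((B:ℝ)*tt)) + (B:ℝ) * (tt^2/(2*(σ2 + Lmax*tt/3)))
          = -((B:ℝ)*tt^2/(2*(σ2 + Lmax*tt/3))) := by
        rw [hlamdef]
        field_simp
        ring
      rw [hv, hexp]
      have hge : a ≤ (B:ℝ)*tt^2/(2*(σ2 + Lmax*tt/3)) := by
        rw [le_div_iff₀ (by positivity)]
        have hss2 : ss^2 = 2*σ2*a/(B:ℝ) := Real.sq_sqrt (by positivity)
        have hBd : (B:ℝ)*d = 2*Lmax*a/3 := by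
          rw [hd]; field_simp
        have hsd : 0 ≤ (B:ℝ)*ss*d := by positivity
        have hBss2 : (B:ℝ)*ss^2 = 2*σ2*a := by
          rw [hss2]; field_simp
        rw [htt]
        exact ineq_ge hBss2 hBd hsd
      calc Real.exp (-((B:ℝ)*tt^2/(2*(σ2 + Lmax*tt/3)))) ≤ Real.exp (-a) :=
        Real.exp_le_exp.2 (by linarith)
      _ = ε := by rw [← hloge, Real.exp_log hε0]
  -- convert to the probability statement
  set E : Set Ω := {ω | ∑ i, Y i ω ≤ (B:ℝ)*tt} with hE
  have hSmeas : Measurable (fun ω => ∑ i, Y i ω) :=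
    Finset.measurable_sum _ (fun i _ => hYmeas i)
  have hEmeas : MeasurableSet E := measurableSet_le hSmeas measurable_const
  have hEc : P Eᶜ ≤ ENNReal.ofReal ε := by
    have hsub : Eᶜ ⊆ {ω | (B:ℝ)*tt ≤ ∑ i, Y i ω} := by
      intro ω hω
      simp only [hE, Set.mem_compl_iff, Set.mem_setOf_eq, not_le] at hω
      exact hω.le
    have h2 : (P Eᶜ).toReal ≤ ε :=
      le_trans (ENNReal.toReal_mono (measure_ne_top _ _) (measure_mono hsub)) hchern
    calc P Eᶜ = ENNReal.ofReal ((P Eᶜ).toReal) :=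
      (ENNReal.ofReal_toReal (measure_ne_top _ _)).symm
    _ ≤ ENNReal.ofReal ε := ENNReal.ofReal_le_ofReal h2
  have hPE : ENNReal.ofReal (1-ε) ≤ P E := by
    have h1 : ENNReal.ofReal (1-ε) = 1 - ENNReal.ofReal ε := by
      rw [ENNReal.ofReal_sub _ hε0.le, ENNReal.ofReal_one]
    rw [h1]
    have h2 := prob_add_prob_compl (μ := P) hEmeas
    have h3 : 1 - ENNReal.ofReal ε ≤ 1 - P Eᶜ := tsub_le_tsub_left hEc 1
    refine h3.trans ?_
    rw [← h2]
    exact le_of_eq (ENNReal.add_sub_cancel_right (measure_ne_top _ _))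
  refine hPE.trans (measure_mono ?_)
  intro ω hω
  simp only [hE, Set.mem_setOf_eq] at hω
  simp only [Set.mem_setOf_eq]
  rw [hs2_eq]
  -- rewrite the sum
  have hW : ∑ i, Y i ω = (B:ℝ)*μ' - ∑ i, δ (τ i ω) * ℓ (τ i ω) := by
    simp only [hYdef, Function.comp_apply, hgdef]
    rw [Finset.sum_sub_distrib, Finset.sum_const, Finset.card_univ, Fintype.card_fin,
      nsmul_eq_mul]
  rw [hW] at hω
  set W : ℝ := ∑ i, δ (τ i ω) * ℓ (τ i ω) with hWdef
  have hμle : μ' ≤ (1/(B:ℝ))*W + tt := by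
    have h2 : μ' - tt ≤ (1/(B:ℝ))*W := by
      rw [one_div, ← div_eq_inv_mul, le_div_iff₀ hBR]
      linarith
    linarith
  have hR : (1/(1-α))*μ' ≤ μ' + α*Lmax := ineq_R h1α hα0 hμ0 hμub
  have hVar : σ2 ≤ (α/(1-α)) * Lmax^2 + ((1/(1-α)) * s2 - ((1/(1-α)) * μ')^2) := by
    rw [hσ2def]
    exact ineq_var h1α hα0 hμ0 hμub (hσ2def ▸ hσ2nn)
  have hsqrt : ss ≤ Real.sqrt (2 * ((α/(1-α)) * Lmax^2 +
      ((1/(1-α)) * s2 - ((1/(1-α)) * μ')^2)) * a / B) := by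
    rw [hss]
    apply Real.sqrt_le_sqrt
    exact div_le_div_of_nonneg_right (ineq_mul2 hVar ha0.le) hBR.le
  have hlast : d + α*Lmax ≤ (Lmax / (3*(1-α)*(B:ℝ))) * (2 * a + 3*α*(B:ℝ)) := by
    have hd3 : d*(3*(B:ℝ)) = 2*Lmax*a := by
      rw [hd]; field_simp
    exact ineq_last h1α hα0 ha0.le hc hBR hd3
  calc (1/(1-α))*μ' ≤ μ' + α*Lmax := hR
  _ ≤ ((1/(B:ℝ))*W + tt) + α*Lmax := by linarith
  _ = (1/(B:ℝ))*W + ss + (d + α*Lmax) := by rw [htt]; ring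
  _ ≤ (1/(B:ℝ))*W + Real.sqrt (2 * ((α/(1-α)) * Lmax^2 +
        ((1/(1-α)) * s2 - ((1/(1-α)) * μ')^2)) * a / B) +
      (Lmax / (3*(1-α)*(B:ℝ))) * (2 * a + 3*α*(B:ℝ)) := by
    exact add_le_add (add_le_add le_rfl hsqrt) hlast
end
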